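/- arXiv:2507.06947 — 4 statements merged into one kernel-verified Lean document; each statement's English description precedes it below -/
import Mathlib

section
/- Let d ≥ 1, let K be a convex body in ℝ^d, let F be a linear subspace of ℝ^d of dimension s with 0 ≤ s ≤ d−1, and let A : ℝ^d → ℝ^d be a self-adjoint positive definite F-operator with A x = μ x for all x ∈ Fᗮ (μ > 0). Set E = A(B^d) and assume E ⊆ K and that E has maximal volume among ellipsoids of revolution with axis F contained in K (for every F-operator B and every z ∈ ℝ^d with B(B^d) + z ⊆ K one has vol(B(B^d) + z) ≤ vol(E)). Then for every c ∈ Fᗮ and every r > 0 such that the set {x ∈ Fᗮ : ‖x − c‖ ≤ r} is contained in K, one has r ≤ (d/(d−s))·μ. (Equivalently, the inradius of K ∩ Fᗮ is at most (d/(d−s)) times the radius μ of E ∩ Fᗮ.) -/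
open MeasureTheory RealInnerProductSpace Metric Set Pointwise

noncomputable section

/-- An `F`-operator: an invertible linear map leaving `F` and `Fᗮ` invariant and acting
as a nonzero multiple of the identity on `Fᗮ`. -/
def IsFOperator {d : ℕ} (F : Submodule ℝ (EuclideanSpace ℝ (Fin d)))
    (A : EuclideanSpace ℝ (Fin d) ≃ₗ[ℝ] EuclideanSpace ℝ (Fin d)) : Prop :=
  (∀ x ∈ F, A x ∈ F) ∧ (∀ x ∈ Fᗮ, A x ∈ Fᗮ) ∧
    ∃ μ : ℝ, μ ≠ 0 ∧ ∀ x ∈ Fᗮ, A x = μ • x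

/-- The orthogonal projection onto `F`, as a map of the ambient space. -/
def projF {d : ℕ} (F : Submodule ℝ (EuclideanSpace ℝ (Fin d)))
    (x : EuclideanSpace ℝ (Fin d)) : EuclideanSpace ℝ (Fin d) :=
  (F.orthogonalProjection x : EuclideanSpace ℝ (Fin d))

/-- A contact pair of convex bodies `K ⊆ L`. -/
def IsContactPair {d : ℕ} (K L : Set (EuclideanSpace ℝ (Fin d)))
    (v p : EuclideanSpace ℝ (Fin d)) : Prop :=
  v ∈ frontier K ∧ v ∈ frontier L ∧ ⟪p, v⟫ = 1 ∧ ∀ x ∈ L, ⟪p, x⟫ ≤ 1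

lemma det_prodMap' {M N : Type*} [AddCommGroup M] [AddCommGroup N] [Module ℝ M] [Module ℝ N]
    [FiniteDimensional ℝ M] [FiniteDimensional ℝ N] (f : M →ₗ[ℝ] M) (g : N →ₗ[ℝ] N) :
    LinearMap.det (f.prodMap g) = LinearMap.det f * LinearMap.det g := by
  classical
  let bM := Module.finBasis ℝ M
  let bN := Module.finBasis ℝ N
  rw [← LinearMap.det_toMatrix (bM.prod bN), LinearMap.toMatrix_prodMap,
    Matrix.det_fromBlocks_zero₂₁, LinearMap.det_toMatrix, LinearMap.det_toMatrix]

set_option maxHeartbeats 1000000 in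
theorem stmt4_aux {d : ℕ} (hd : 1 ≤ d)
    (K : Set (EuclideanSpace ℝ (Fin d)))
    (hKconv : Convex ℝ K)
    (F : Submodule ℝ (EuclideanSpace ℝ (Fin d))) (s : ℕ)
    (hs : Module.finrank ℝ F = s) (hsd : s < d)
    (A : EuclideanSpace ℝ (Fin d) ≃ₗ[ℝ] EuclideanSpace ℝ (Fin d))
    (hA : IsFOperator F A)
    (μ : ℝ) (hμ : 0 < μ) (hAμ : ∀ x ∈ Fᗮ, A x = μ • x)
    (E : Set (EuclideanSpace ℝ (Fin d)))
    (hE : E = A '' closedBall (0 : EuclideanSpace ℝ (Fin d)) 1)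
    (hEK : E ⊆ K)
    (hmax : ∀ (B : EuclideanSpace ℝ (Fin d) ≃ₗ[ℝ] EuclideanSpace ℝ (Fin d)),
      IsFOperator F B → ∀ z : EuclideanSpace ℝ (Fin d),
        (fun y => B y + z) '' closedBall (0 : EuclideanSpace ℝ (Fin d)) 1 ⊆ K →
        volume ((fun y => B y + z) '' closedBall (0 : EuclideanSpace ℝ (Fin d)) 1) ≤ volume E)
    (hex : ∀ (s' d' : ℕ) (ε : ℝ), 0 < ε → (s' : ℝ) < ((d' : ℝ) - (s' : ℝ)) * ε → s' ≤ d' →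
      ∃ t : ℝ, 0 < t ∧ t < 1 ∧ 1 < (1 - t) ^ s' * (1 + t * ε) ^ (d' - s')) :
    ∀ c ∈ Fᗮ, ∀ r : ℝ, 0 < r →
      {x : EuclideanSpace ℝ (Fin d) | x ∈ Fᗮ ∧ ‖x - c‖ ≤ r} ⊆ K →
      r ≤ ((d : ℝ) / ((d : ℝ) - (s : ℝ))) * μ := by
  classical
  intro c hc r hr hDK
  by_contra hcon
  push_neg at hcon
  have hds : (0 : ℝ) < (d : ℝ) - s := by
    have : (s : ℝ) < d := by exact_mod_cast hsd
    linarith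
  set ε : ℝ := r / μ - 1 with hεdef
  have hdμr : (d : ℝ) * μ < r * ((d : ℝ) - s) := by
    rw [div_mul_eq_mul_div, div_lt_iff₀ hds] at hcon; linarith
  have hεs : (s : ℝ) < ((d : ℝ) - s) * ε := by
    have h4 : ((d:ℝ)-s) * (r/μ - 1) = (((d:ℝ)-s)*r - ((d:ℝ)-s)*μ)/μ := by
      field_simp
    rw [hεdef, h4, lt_div_iff₀ hμ]
    nlinarith
  have hε0 : 0 < ε := by
    have hs0 : (0 : ℝ) ≤ s := Nat.cast_nonneg s
    nlinarith
  obtain ⟨t, ht0, ht1, hprod⟩ := hex s d ε hε0 hεs hsd.le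
  set β : ℝ := 1 - t with hβdef
  set α : ℝ := 1 + t * ε with hαdef
  have hβ0 : 0 < β := by simp only [hβdef]; linarith
  have hα0 : 0 < α := by simp only [hαdef]; nlinarith
  have hβ : β ≠ 0 := ne_of_gt hβ0
  have hα : α ≠ 0 := ne_of_gt hα0
  have hαμ : α * μ = (1 - t) * μ + t * r := by
    simp only [hαdef, hεdef]; field_simp; ring
  have hcompl : IsCompl F Fᗮ := F.isCompl_orthogonal
  set e := Submodule.prodEquivOfIsCompl F Fᗮ hcompl with he
  set Dp := (LinearEquiv.smulOfNeZero ℝ F β hβ).prodCongr (LinearEquiv.smulOfNeZero ℝ Fᗮ α hα) with hDp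
  set Dscale := (e.symm.trans (Dp.trans e)) with hD
  have hDF : ∀ x ∈ F, Dscale x = β • x := by
    intro x hx
    have h1 : e.symm x = (⟨x, hx⟩, 0) :=
      Submodule.prodEquivOfIsCompl_symm_apply_left (p := F) (q := Fᗮ) hcompl (⟨x, hx⟩ : F)
    rw [hD, LinearEquiv.trans_apply, h1]
    simp [LinearEquiv.trans_apply, hDp, LinearEquiv.prodCongr_apply, he,
      Submodule.coe_prodEquivOfIsCompl']
  have hDFp : ∀ x ∈ Fᗮ, Dscale x = α • x := by
    intro x hx
    have h1 : e.symm x = (0, ⟨x, hx⟩) :=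
      Submodule.prodEquivOfIsCompl_symm_apply_right (p := F) (q := Fᗮ) hcompl (⟨x, hx⟩ : Fᗮ)
    rw [hD, LinearEquiv.trans_apply, h1]
    simp [LinearEquiv.trans_apply, hDp, LinearEquiv.prodCongr_apply, he,
      Submodule.coe_prodEquivOfIsCompl']
  have hrankFp : Module.finrank ℝ Fᗮ = d - s := by
    have h1 := Submodule.finrank_add_finrank_orthogonal (K := F)
    rw [hs] at h1
    have h2 : Module.finrank ℝ (EuclideanSpace ℝ (Fin d)) = d := finrank_euclideanSpace_fin
    omega
  have hdetD : LinearMap.det (Dscale : EuclideanSpace ℝ (Fin d) →ₗ[ℝ] EuclideanSpace ℝ (Fin d))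
      = β ^ s * α ^ (d - s) := by
    have h2 : (Dscale : EuclideanSpace ℝ (Fin d) →ₗ[ℝ] EuclideanSpace ℝ (Fin d))
        = (e : F × Fᗮ →ₗ[ℝ] EuclideanSpace ℝ (Fin d)) ∘ₗ (Dp : F × Fᗮ →ₗ[ℝ] F × Fᗮ)
          ∘ₗ (e.symm : EuclideanSpace ℝ (Fin d) →ₗ[ℝ] F × Fᗮ) := by
      ext x; rfl
    rw [h2, LinearMap.det_conj]
    have h3 : (Dp : F × Fᗮ →ₗ[ℝ] F × Fᗮ)
        = ((β • LinearMap.id : F →ₗ[ℝ] F).prodMap (α • LinearMap.id : Fᗮ →ₗ[ℝ] Fᗮ)) := by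
      ext x <;> rfl
    rw [h3, det_prodMap', LinearMap.det_smul, LinearMap.det_smul, hs, hrankFp]
    simp [LinearMap.det_id]
  set B := Dscale.trans A with hBdef
  have hBapp : ∀ x : EuclideanSpace ℝ (Fin d), B x = A (Dscale x) := fun x => rfl
  have hBF : IsFOperator F B := by
    refine ⟨fun x hx => ?_, fun x hx => ?_, ⟨α * μ, by positivity, fun x hx => ?_⟩⟩
    · rw [hBapp, hDF x hx, _root_.map_smul]
      exact F.smul_mem β (hA.1 x hx)
    · rw [hBapp, hDFp x hx, _root_.map_smul]
      exact Submodule.smul_mem _ α (hA.2.1 x hx)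
    · rw [hBapp, hDFp x hx, _root_.map_smul, hAμ x hx, smul_smul]
  set z : EuclideanSpace ℝ (Fin d) := t • c with hz
  have hsub : (fun y => B y + z) '' closedBall (0 : EuclideanSpace ℝ (Fin d)) 1 ⊆ K := by
    rintro p ⟨u, hu, rfl⟩
    rw [mem_closedBall, dist_zero_right] at hu
    set w : EuclideanSpace ℝ (Fin d) := (F.orthogonalProjection u : EuclideanSpace ℝ (Fin d))
      with hw
    set y : EuclideanSpace ℝ (Fin d) := u - w with hy
    have hwF : w ∈ F := SetLike.coe_mem _
    have hyF : y ∈ Fᗮ := F.sub_starProjection_mem_orthogonal u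
    have hwy : w + y = u := by simp [hy]
    have hiwy : ⟪w, y⟫ = 0 := Submodule.inner_right_of_mem_orthogonal hwF hyF
    have hnorm : ‖u‖ ^ 2 = ‖w‖ ^ 2 + ‖y‖ ^ 2 := by
      rw [← hwy, @norm_add_sq_real, hiwy]; ring
    have hy1 : ‖y‖ ≤ 1 := by
      nlinarith [norm_nonneg y, norm_nonneg w, norm_nonneg u]
    have hAu : A u = A w + μ • y := by
      rw [← hwy, map_add, hAμ y hyF]
    have hDu : Dscale u = β • w + α • y := by
      conv_lhs => rw [← hwy]
      rw [map_add, hDF w hwF, hDFp y hyF]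
    have hmem1 : A u ∈ K := by
      apply hEK; rw [hE]
      exact ⟨u, by simpa [mem_closedBall, dist_zero_right] using hu, rfl⟩
    have hmem2 : c + r • y ∈ K := by
      apply hDK
      constructor
      · exact Submodule.add_mem _ hc (Submodule.smul_mem _ r hyF)
      · have h5 : c + r • y - c = r • y := by abel
        rw [h5, norm_smul, Real.norm_eq_abs, abs_of_pos hr]
        nlinarith
    have hdecomp : B u + z = (1 - t) • (A u) + t • (c + r • y) := by
      have h1 : B u = β • A w + (α * μ) • y := by
        rw [hBapp, hDu, map_add, _root_.map_smul, _root_.map_smul, hAμ y hyF, smul_smul]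
      rw [h1, hAu, hαμ, hz, hβdef]
      module
    show B u + z ∈ K
    rw [hdecomp]
    exact hKconv hmem1 hmem2 (by linarith) (le_of_lt ht0) (by ring)
  have hvol := hmax B hBF z hsub
  set S := closedBall (0 : EuclideanSpace ℝ (Fin d)) 1 with hS
  have hS0 : volume S ≠ 0 := by
    apply ne_of_gt
    exact measure_closedBall_pos volume 0 one_pos
  have hStop : volume S ≠ ⊤ := measure_closedBall_lt_top.ne
  have himg : volume ((fun y => B y + z) '' S) = volume (⇑B '' S) := by
    rw [← Set.image_image (fun v => v + z) (⇑B)]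
    rw [Set.image_add_right, measure_preimage_add_right]
  have hvolB : volume (⇑B '' S)
      = ENNReal.ofReal
        |LinearMap.det (B : EuclideanSpace ℝ (Fin d) →ₗ[ℝ] EuclideanSpace ℝ (Fin d))|
        * volume S :=
    Measure.addHaar_image_linearMap volume _ S
  have hvolE : volume E = ENNReal.ofReal
      |LinearMap.det (A : EuclideanSpace ℝ (Fin d) →ₗ[ℝ] EuclideanSpace ℝ (Fin d))|
      * volume S := by
    rw [hE]
    exact Measure.addHaar_image_linearMap volume _ S
  have hdetB : LinearMap.det (B : EuclideanSpace ℝ (Fin d) →ₗ[ℝ] EuclideanSpace ℝ (Fin d))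
      = LinearMap.det (A : EuclideanSpace ℝ (Fin d) →ₗ[ℝ] EuclideanSpace ℝ (Fin d))
        * (β ^ s * α ^ (d - s)) := by
    have h0 : (B : EuclideanSpace ℝ (Fin d) →ₗ[ℝ] EuclideanSpace ℝ (Fin d))
        = (A : EuclideanSpace ℝ (Fin d) →ₗ[ℝ] EuclideanSpace ℝ (Fin d))
          ∘ₗ (Dscale : EuclideanSpace ℝ (Fin d) →ₗ[ℝ] EuclideanSpace ℝ (Fin d)) := by
      ext x; rfl
    rw [h0, LinearMap.det_comp, hdetD]
  have hdetA :
      LinearMap.det (A : EuclideanSpace ℝ (Fin d) →ₗ[ℝ] EuclideanSpace ℝ (Fin d)) ≠ 0 :=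
    (LinearEquiv.isUnit_det' A).ne_zero
  rw [himg, hvolB, hvolE, hdetB] at hvol
  have hle := (ENNReal.mul_le_mul_iff_left hS0 hStop).mp hvol
  rw [ENNReal.ofReal_le_ofReal_iff (abs_nonneg _)] at hle
  rw [abs_mul] at hle
  have hpow : |β ^ s * α ^ (d - s)| = β ^ s * α ^ (d - s) := by
    apply abs_of_pos; positivity
  rw [hpow] at hle
  have hAabs : 0 < |LinearMap.det
      (A : EuclideanSpace ℝ (Fin d) →ₗ[ℝ] EuclideanSpace ℝ (Fin d))| := abs_pos.mpr hdetA
  nlinarith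

lemma exists_t (s d : ℕ) (ε : ℝ) (hε0 : 0 < ε) (hε : (s : ℝ) < ((d : ℝ) - (s : ℝ)) * ε)
    (hsd : s ≤ d) :
    ∃ t : ℝ, 0 < t ∧ t < 1 ∧ 1 < (1 - t) ^ s * (1 + t * ε) ^ (d - s) := by
  have hn : ((d - s : ℕ) : ℝ) = (d : ℝ) - (s : ℝ) := by
    push_cast [Nat.cast_sub hsd]; ring
  set n : ℕ := d - s with hndef
  set δ : ℝ := ((d : ℝ) - (s : ℝ)) * ε - s with hδdef
  have hδ : 0 < δ := by simp only [hδdef]; linarith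
  have hs0 : (0 : ℝ) ≤ s := Nat.cast_nonneg s
  have hde : 0 < ((d : ℝ) - s) * ε := lt_of_le_of_lt hs0 hε
  have hD : 0 < 2 * ((s : ℝ) * ((d : ℝ) - s) * ε + δ) := by nlinarith
  set t : ℝ := δ / (2 * ((s : ℝ) * ((d : ℝ) - s) * ε + δ)) with htdef
  have ht0 : 0 < t := div_pos hδ hD
  have ht2 : t ≤ 1 / 2 := by
    rw [htdef, div_le_div_iff₀ hD (by norm_num)]
    nlinarith
  have hst : (s : ℝ) * t ≤ 1 / 2 := by
    rw [htdef, ← mul_div_assoc, div_le_div_iff₀ hD (by norm_num)]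
    nlinarith
  have hkey : (s : ℝ) * (((d : ℝ) - s) * ε) * t ≤ δ / 2 := by
    rw [htdef, ← mul_div_assoc, div_le_div_iff₀ hD (by norm_num)]
    nlinarith
  refine ⟨t, ht0, by linarith, ?_⟩
  have hb1 : 1 - (s : ℝ) * t ≤ (1 - t) ^ s := by
    have := one_add_mul_le_pow (a := -t) (by linarith) s
    calc 1 - (s:ℝ)*t = 1 + s * (-t) := by ring
    _ ≤ (1 + -t) ^ s := this
    _ = (1 - t) ^ s := by ring_nf
  have hb2 : 1 + ((d : ℝ) - s) * ε * t ≤ (1 + t * ε) ^ n := by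
    have := one_add_mul_le_pow (a := t * ε) (by nlinarith) n
    calc 1 + ((d:ℝ) - s) * ε * t = 1 + n * (t * ε) := by rw [hn]; ring
    _ ≤ (1 + t * ε) ^ n := this
  have hprod : (1 - (s:ℝ)*t) * (1 + ((d:ℝ)-s)*ε*t) ≤ (1 - t)^s * (1 + t*ε)^n := by
    apply mul_le_mul hb1 hb2 (by nlinarith) (pow_nonneg (by linarith) s)
  have : 1 + δ * t / 2 ≤ (1 - (s:ℝ)*t) * (1 + ((d:ℝ)-s)*ε*t) := by nlinarith
  nlinarith

/-- **Inradius bound in `Fᗮ` for a maximal ellipsoid of revolution.**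
If `E = A(B^d)` is a maximal-volume ellipsoid of revolution with axis `F` (`dim F = s < d`)
contained in a convex body `K`, where `A` is a self-adjoint positive definite `F`-operator
acting as `μ • id` on `Fᗮ`, then any ball of `Fᗮ` of radius `r` contained in `K` satisfies
`r ≤ (d/(d-s)) * μ`. -/
theorem stmt4 {d : ℕ} (hd : 1 ≤ d)
    (K : Set (EuclideanSpace ℝ (Fin d)))
    (hKcpt : IsCompact K) (hKconv : Convex ℝ K) (hKint : (interior K).Nonempty)
    (F : Submodule ℝ (EuclideanSpace ℝ (Fin d))) (s : ℕ)
    (hs : Module.finrank ℝ F = s) (hsd : s < d)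
    (A : EuclideanSpace ℝ (Fin d) ≃ₗ[ℝ] EuclideanSpace ℝ (Fin d))
    (hA : IsFOperator F A)
    (hAsa : ∀ x y : EuclideanSpace ℝ (Fin d), ⟪A x, y⟫ = ⟪x, A y⟫)
    (hApd : ∀ x : EuclideanSpace ℝ (Fin d), x ≠ 0 → 0 < ⟪A x, x⟫)
    (μ : ℝ) (hμ : 0 < μ) (hAμ : ∀ x ∈ Fᗮ, A x = μ • x)
    (E : Set (EuclideanSpace ℝ (Fin d)))
    (hE : E = A '' closedBall (0 : EuclideanSpace ℝ (Fin d)) 1)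
    (hEK : E ⊆ K)
    (hmax : ∀ (B : EuclideanSpace ℝ (Fin d) ≃ₗ[ℝ] EuclideanSpace ℝ (Fin d)),
      IsFOperator F B → ∀ z : EuclideanSpace ℝ (Fin d),
        (fun y => B y + z) '' closedBall (0 : EuclideanSpace ℝ (Fin d)) 1 ⊆ K →
        volume ((fun y => B y + z) '' closedBall (0 : EuclideanSpace ℝ (Fin d)) 1) ≤ volume E) :
    ∀ c ∈ Fᗮ, ∀ r : ℝ, 0 < r →
      {x : EuclideanSpace ℝ (Fin d) | x ∈ Fᗮ ∧ ‖x - c‖ ≤ r} ⊆ K →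
      r ≤ ((d : ℝ) / ((d : ℝ) - (s : ℝ))) * μ := by
  exact stmt4_aux hd K hKconv F s hs hsd A hA μ hμ hAμ E hE hEK hmax exists_t
end
end

section
/- Let d ≥ 1, let K ⊆ L be convex bodies in ℝ^d with the origin in the interior of K, let F be a linear subspace of ℝ^d, let (v₁,p₁), …, (v_m,p_m) be contact pairs of K and L, and let α₁, …, α_m be positive reals satisfying: (a) P_F(Σ_{i=1}^m αᵢ ⟨vᵢ, P_F x⟩ pᵢ) = P_F x for every x ∈ ℝ^d; (b) Σ_{i=1}^m αᵢ pᵢ = 0; and (c) Σ_{i=1}^m αᵢ = d. Assume in addition that P_F(K) ⊆ L ∩ F. Then there exist a point z in the intrinsic (relative) interior of L ∩ F and positive reals c₁, …, c_m such that ⟨z, pᵢ⟩ < 1 for every i and, setting vᵢ' = vᵢ − z and pᵢ' = pᵢ/(1 − ⟨z,pᵢ⟩), each (vᵢ', pᵢ') is a contact pair of K − z and L − z, Σ_{i=1}^m cᵢ ⟨vᵢ', x⟩ pᵢ' = Σ_{i=1}^m αᵢ ⟨vᵢ, x⟩ pᵢ for every x ∈ ℝ^d, Σ_{i=1}^m cᵢ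 P_F vᵢ' = 0, and Σ_{i=1}^m cᵢ pᵢ' = 0. -/
open MeasureTheory RealInnerProductSpace Metric Set Pointwise

noncomputable section

section helpers
variable {d : ℕ} (F : Submodule ℝ (EuclideanSpace ℝ (Fin d)))

lemma projF_mem (x : EuclideanSpace ℝ (Fin d)) : projF F x ∈ F := (F.orthogonalProjection x).2

lemma projF_eq_self {x : EuclideanSpace ℝ (Fin d)} (hx : x ∈ F) : projF F x = x :=
  Submodule.starProjection_eq_self_iff.2 hx

lemma projF_inner (x y : EuclideanSpace ℝ (Fin d)) : ⟪projF F x, y⟫ = ⟪x, projF F y⟫ :=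
  Submodule.inner_starProjection_left_eq_right F x y

lemma projF_smul (r : ℝ) (x : EuclideanSpace ℝ (Fin d)) : projF F (r • x) = r • projF F x := by
  simp [projF]

lemma projF_sub (x y : EuclideanSpace ℝ (Fin d)) :
    projF F (x - y) = projF F x - projF F y := by
  simp [projF]

lemma projF_sum {m : ℕ} (f : Fin m → EuclideanSpace ℝ (Fin d)) :
    projF F (∑ i, f i) = ∑ i, projF F (f i) := by
  simp [projF]

end helpers

/-- **Search for a good center.**
If contact pairs `(vᵢ, pᵢ)` of `K ⊆ L` with positive weights `αᵢ` satisfy the John-type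
identities with axis `F`, and `P_F K ⊆ L ∩ F`, then there is a point `z` in the relative
interior of `L ∩ F` and weights `cᵢ > 0` so that the recentered pairs
`(vᵢ - z, pᵢ / (1 - ⟨z, pᵢ⟩))` are contact pairs of `K - z` and `L - z` with the same
operator `∑ αᵢ pᵢ ⊗ vᵢ`, and moreover `∑ cᵢ P_F vᵢ' = 0` and `∑ cᵢ pᵢ' = 0`. -/
theorem stmt9 {d : ℕ} (hd : 1 ≤ d)
    (K L : Set (EuclideanSpace ℝ (Fin d)))
    (hKcpt : IsCompact K) (hKconv : Convex ℝ K)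
    (hK0 : (0 : EuclideanSpace ℝ (Fin d)) ∈ interior K)
    (hLcpt : IsCompact L) (hLconv : Convex ℝ L) (hLint : (interior L).Nonempty)
    (hKL : K ⊆ L)
    (F : Submodule ℝ (EuclideanSpace ℝ (Fin d)))
    {m : ℕ} (v p : Fin m → EuclideanSpace ℝ (Fin d)) (α : Fin m → ℝ)
    (hcp : ∀ i, IsContactPair K L (v i) (p i))
    (hα : ∀ i, 0 < α i)
    (ha : ∀ x, projF F (∑ i, (α i * ⟪v i, projF F x⟫) • p i) = projF F x)
    (hb : ∑ i, α i • p i = 0)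
    (hsum : ∑ i, α i = (d : ℝ))
    (hproj : projF F '' K ⊆ L ∩ (F : Set (EuclideanSpace ℝ (Fin d)))) :
    ∃ z ∈ intrinsicInterior ℝ (L ∩ (F : Set (EuclideanSpace ℝ (Fin d)))),
      ∃ c : Fin m → ℝ,
        (∀ i, 0 < c i) ∧
        (∀ i, ⟪z, p i⟫ < 1) ∧
        (∀ i, IsContactPair ((fun x => x - z) '' K) ((fun x => x - z) '' L)
          (v i - z) ((1 - ⟪z, p i⟫)⁻¹ • p i)) ∧
        (∀ x : EuclideanSpace ℝ (Fin d),
          ∑ i, (c i * ⟪v i - z, x⟫) • ((1 - ⟪z, p i⟫)⁻¹ • p i)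
            = ∑ i, (α i * ⟪v i, x⟫) • p i) ∧
        (∑ i, c i • projF F (v i - z) = 0) ∧
        (∑ i, c i • ((1 - ⟪z, p i⟫)⁻¹ • p i) = 0) := by
  classical
  have hd0 : (0:ℝ) < (d:ℝ) := by exact_mod_cast hd
  have hd1 : (0:ℝ) < (d:ℝ) + 1 := by positivity
  have hKcl : IsClosed K := hKcpt.isClosed
  have hvK : ∀ i, v i ∈ K := fun i => by
    have h := (hcp i).1
    rw [frontier, hKcl.closure_eq] at h
    exact h.1
  have hPvLF : ∀ i, projF F (v i) ∈ L ∩ (F : Set (EuclideanSpace ℝ (Fin d))) :=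
    fun i => hproj ⟨v i, hvK i, rfl⟩
  have h0L : (0 : EuclideanSpace ℝ (Fin d)) ∈ interior L := interior_mono hKL hK0
  set w : EuclideanSpace ℝ (Fin d) := ∑ i, α i • projF F (v i) with hw
  set z : EuclideanSpace ℝ (Fin d) := ((d:ℝ)+1)⁻¹ • w with hz
  have hwF : w ∈ F := Submodule.sum_mem _ fun i _ => F.smul_mem _ (projF_mem F _)
  have hzF : z ∈ F := F.smul_mem _ hwF
  -- z lies in the interior of L
  have hyL : ∑ i, ((d:ℝ)⁻¹ * α i) • projF F (v i) ∈ L := by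
    refine hLconv.sum_mem (fun i _ => mul_nonneg (by positivity) (hα i).le) ?_
      (fun i _ => (hPvLF i).1)
    rw [← Finset.mul_sum, hsum]
    field_simp
  have hyw : ∑ i, ((d:ℝ)⁻¹ * α i) • projF F (v i) = (d:ℝ)⁻¹ • w := by
    rw [hw, Finset.smul_sum]
    exact Finset.sum_congr rfl fun i _ => (smul_smul _ _ _).symm
  have hzint : z ∈ interior L := by
    have hzeq : z = ((d:ℝ)+1)⁻¹ • (0 : EuclideanSpace ℝ (Fin d))
        + ((d:ℝ)/((d:ℝ)+1)) • ((d:ℝ)⁻¹ • w) := by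
      rw [smul_zero, zero_add, smul_smul, hz]
      congr 1
      field_simp
    rw [hzeq]
    exact hLconv.combo_interior_closure_mem_interior h0L
      (subset_closure (hyw ▸ hyL)) (by positivity) (by positivity) (by field_simp; ring)
  have hzmemLF : z ∈ L ∩ (F : Set (EuclideanSpace ℝ (Fin d))) := ⟨interior_subset hzint, hzF⟩
  have hzii : z ∈ intrinsicInterior ℝ (L ∩ (F : Set (EuclideanSpace ℝ (Fin d)))) := by
    refine ⟨⟨z, subset_affineSpan ℝ _ hzmemLF⟩, ?_, rfl⟩
    have hle : affineSpan ℝ (L ∩ (F : Set (EuclideanSpace ℝ (Fin d)))) ≤ F.toAffineSubspace :=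
      affineSpan_le.2 (fun x hx => hx.2)
    have hsub : ((↑) ⁻¹' (interior L) :
        Set (affineSpan ℝ (L ∩ (F : Set (EuclideanSpace ℝ (Fin d))))))
        ⊆ (↑) ⁻¹' (L ∩ (F : Set (EuclideanSpace ℝ (Fin d)))) := by
      intro u hu
      exact ⟨interior_subset hu, hle u.2⟩
    exact interior_maximal hsub (isOpen_interior.preimage continuous_subtype_val) hzint
  -- bound on ⟪z, p i⟫
  have hti : ∀ i, ⟪z, p i⟫ ≤ (d:ℝ)/((d:ℝ)+1) := by
    intro i
    have e1 : ⟪z, p i⟫ = ((d:ℝ)+1)⁻¹ * ∑ j, α j * ⟪p i, projF F (v j)⟫ := by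
      rw [real_inner_comm, hz, real_inner_smul_right, hw, inner_sum]
      simp_rw [real_inner_smul_right]
    rw [e1, div_eq_inv_mul]
    refine mul_le_mul_of_nonneg_left ?_ (by positivity)
    calc ∑ j, α j * ⟪p i, projF F (v j)⟫ ≤ ∑ j, α j * 1 :=
          Finset.sum_le_sum fun j _ =>
            mul_le_mul_of_nonneg_left ((hcp i).2.2.2 _ (hPvLF j).1) (hα j).le
      _ = (d:ℝ) := by simpa using hsum
  have ht1 : ∀ i, ⟪z, p i⟫ < 1 := fun i =>
    lt_of_le_of_lt (hti i) (by rw [div_lt_one hd1]; linarith)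
  have hpos : ∀ i, 0 < 1 - ⟪z, p i⟫ := fun i => by linarith [ht1 i]
  -- key transpose identity
  have hkey : ∀ y, y ∈ F → projF F (∑ i, (α i * ⟪p i, y⟫) • v i) = y := by
    intro y hy
    apply ext_inner_right ℝ
    intro x
    rw [projF_inner, sum_inner]
    simp_rw [real_inner_smul_left]
    have h2 : ⟪y, projF F x⟫ = ∑ i, (α i * ⟪v i, projF F x⟫) * ⟪y, p i⟫ := by
      conv_lhs => rw [← ha x]
      rw [← projF_inner, projF_eq_self F hy, inner_sum]
      simp_rw [real_inner_smul_right]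
    have h3 : ⟪y, projF F x⟫ = ⟪y, x⟫ := by rw [← projF_inner, projF_eq_self F hy]
    rw [← h3, h2]
    refine Finset.sum_congr rfl fun i _ => ?_
    rw [real_inner_comm y (p i)]
    ring
  have hzp : ∑ i, α i * ⟪z, p i⟫ = 0 := by
    have h : ⟪z, ∑ i, α i • p i⟫ = (0:ℝ) := by rw [hb, inner_zero_right]
    rw [inner_sum] at h
    simp only [real_inner_smul_right] at h
    exact h
  have hzv : ∑ i, (α i * ⟪z, p i⟫) • projF F (v i) = z := by
    have h := hkey z hzF
    rw [projF_sum] at h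
    simp_rw [projF_smul] at h
    calc ∑ i, (α i * ⟪z, p i⟫) • projF F (v i)
        = ∑ i, (α i * ⟪p i, z⟫) • projF F (v i) :=
          Finset.sum_congr rfl fun i _ => by rw [real_inner_comm (p i) z]
      _ = z := h
  -- the weights
  refine ⟨z, hzii, fun i => α i * (1 - ⟪z, p i⟫), fun i => mul_pos (hα i) (hpos i), ht1,
    ?_, ?_, ?_, ?_⟩
  · -- contact pairs
    intro i
    obtain ⟨hv1, hv2, hv3, hv4⟩ := hcp i
    have himgK : (fun x => x - z) '' K = (Homeomorph.subRight z) '' K := rfl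
    have himgL : (fun x => x - z) '' L = (Homeomorph.subRight z) '' L := rfl
    refine ⟨?_, ?_, ?_, ?_⟩
    · rw [himgK, ← Homeomorph.image_frontier]
      exact ⟨v i, hv1, rfl⟩
    · rw [himgL, ← Homeomorph.image_frontier]
      exact ⟨v i, hv2, rfl⟩
    · rw [real_inner_smul_left, inner_sub_right, hv3, real_inner_comm z (p i)]
      exact inv_mul_cancel₀ (hpos i).ne'
    · rintro x ⟨y, hy, rfl⟩
      rw [real_inner_smul_left, inner_sub_right, real_inner_comm z (p i)]
      have h1 := hv4 y hy
      calc (1 - ⟪z, p i⟫)⁻¹ * (⟪p i, y⟫ - ⟪z, p i⟫)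
          ≤ (1 - ⟪z, p i⟫)⁻¹ * (1 - ⟪z, p i⟫) :=
            mul_le_mul_of_nonneg_left (by linarith) (inv_nonneg.2 (hpos i).le)
        _ = 1 := inv_mul_cancel₀ (hpos i).ne'
  · -- operator identity
    intro x
    have step : ∀ i, ((α i * (1 - ⟪z, p i⟫)) * ⟪v i - z, x⟫) • ((1 - ⟪z, p i⟫)⁻¹ • p i)
        = (α i * ⟪v i, x⟫) • p i - (α i * ⟪z, x⟫) • p i := by
      intro i
      rw [smul_smul, inner_sub_left, ← sub_smul]
      congr 1
      have h4 : (1 - ⟪z, p i⟫) * (1 - ⟪z, p i⟫)⁻¹ = 1 := mul_inv_cancel₀ (hpos i).ne'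
      calc α i * (1 - ⟪z, p i⟫) * (⟪v i, x⟫ - ⟪z, x⟫) * (1 - ⟪z, p i⟫)⁻¹
          = (1 - ⟪z, p i⟫) * (1 - ⟪z, p i⟫)⁻¹ * (α i * (⟪v i, x⟫ - ⟪z, x⟫)) := by ring
        _ = α i * ⟪v i, x⟫ - α i * ⟪z, x⟫ := by rw [h4]; ring
    simp_rw [step]
    rw [Finset.sum_sub_distrib]
    have h0 : ∑ i, (α i * ⟪z, x⟫) • p i = (0 : EuclideanSpace ℝ (Fin d)) := by
      have e : ∑ i, (α i * ⟪z, x⟫) • p i = ⟪z, x⟫ • ∑ i, α i • p i := by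
        rw [Finset.smul_sum]
        exact Finset.sum_congr rfl fun i _ => by rw [smul_smul, mul_comm]
      rw [e, hb, smul_zero]
    rw [h0, sub_zero]
  · -- sum of c_i P_F v_i' = 0
    have expand : ∀ i, (α i * (1 - ⟪z, p i⟫)) • projF F (v i - z)
        = (α i • projF F (v i) - (α i * ⟪z, p i⟫) • projF F (v i))
          - (α i • z - (α i * ⟪z, p i⟫) • z) := by
      intro i
      rw [projF_sub, projF_eq_self F hzF, smul_sub, mul_sub, mul_one, sub_smul, sub_smul]
    simp_rw [expand]
    rw [Finset.sum_sub_distrib, Finset.sum_sub_distrib, Finset.sum_sub_distrib, hzv, ← hw,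
      ← Finset.sum_smul, ← Finset.sum_smul, hsum, hzp, zero_smul, sub_zero]
    have hwz : ((d:ℝ)+1) • z = w := by
      rw [hz, smul_smul, mul_inv_cancel₀ hd1.ne', one_smul]
    rw [← hwz]
    module
  · -- sum of c_i p_i' = 0
    have e : ∀ i, (α i * (1 - ⟪z, p i⟫)) • ((1 - ⟪z, p i⟫)⁻¹ • p i) = α i • p i := by
      intro i
      rw [smul_smul, mul_assoc, mul_inv_cancel₀ (hpos i).ne', mul_one]
    simp_rw [e]
    exact hb
end
end

section
/- Let d ≥ 1 and let A₁, A₂ be real symmetric positive definite d×d matrices and z₁, z₂ ∈ ℝ^d. Let E₁ = z₁ + A₁(B^d) and E₂ = z₂ + A₂(B^d), where B^d is the closed Euclidean unit ball, and assume E₁ ⊆ E₂. Let λ₁ ≤ λ₂ ≤ … ≤ λ_d be the eigenvalues of A₁ in increasing order and μ₁ ≤ μ₂ ≤ … ≤ μ_d be the eigenvalues of A₂ in increasing order (these are the lengths of the principal semi-axes of E₁ and E₂). Then λᵢ ≤ μᵢ for every i ∈ {1, …, d}. -/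
open MeasureTheory Metric Set

noncomputable section

section Aux

variable {d : ℕ}

local notation "E" => EuclideanSpace ℝ (Fin d)

lemma parseval_aux (b : OrthonormalBasis (Fin d) ℝ (EuclideanSpace ℝ (Fin d)))
    (x : EuclideanSpace ℝ (Fin d)) :
    ‖x‖ ^ 2 = ∑ k, (inner ℝ (b k) x : ℝ) ^ 2 := by
  have h := b.sum_inner_mul_inner x x
  rw [← real_inner_self_eq_norm_sq, ← h]
  refine Finset.sum_congr rfl fun k _ => ?_
  rw [real_inner_comm x (b k), sq]

/-- eigen relation for `toEuclideanLin`. -/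
lemma toEuclideanLin_eigen {A : Matrix (Fin d) (Fin d) ℝ} (hA : A.IsHermitian) (j : Fin d) :
    Matrix.toEuclideanLin A (hA.eigenvectorBasis j) = hA.eigenvalues j • hA.eigenvectorBasis j := by
  have h := hA.mulVec_eigenvectorBasis j
  ext k
  have := congrFun h k
  simpa [Matrix.toEuclideanLin_apply] using this

end Aux

/-- **Containment of ellipsoids and principal semi-axes.**
If `E₁ = z₁ + A₁(B^d) ⊆ E₂ = z₂ + A₂(B^d)` for symmetric positive definite matrices `A₁, A₂`,
then the increasingly ordered eigenvalues (principal semi-axis lengths) satisfy `λᵢ ≤ μᵢ`. -/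
theorem stmt10 {d : ℕ} (hd : 1 ≤ d)
    (A₁ A₂ : Matrix (Fin d) (Fin d) ℝ)
    (hA₁ : A₁.IsHermitian) (hA₂ : A₂.IsHermitian)
    (hA₁pd : A₁.PosDef) (hA₂pd : A₂.PosDef)
    (z₁ z₂ : EuclideanSpace ℝ (Fin d))
    (hsub : (fun x => z₁ + Matrix.toEuclideanLin A₁ x) ''
        closedBall (0 : EuclideanSpace ℝ (Fin d)) 1 ⊆
      (fun x => z₂ + Matrix.toEuclideanLin A₂ x) ''
        closedBall (0 : EuclideanSpace ℝ (Fin d)) 1)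
    (lam mu : Fin d → ℝ) (hlam : Monotone lam) (hmu : Monotone mu)
    (σ τ : Equiv.Perm (Fin d))
    (hlam' : lam = hA₁.eigenvalues ∘ σ) (hmu' : mu = hA₂.eigenvalues ∘ τ) :
    ∀ i : Fin d, lam i ≤ mu i := by
  classical
  set L₁ := Matrix.toEuclideanLin A₁ with hL₁
  set L₂ := Matrix.toEuclideanLin A₂ with hL₂
  have hS₁ : (Matrix.toEuclideanLin A₁).IsSymmetric := Matrix.isHermitian_iff_isSymmetric.1 hA₁
  have hS₂ : (Matrix.toEuclideanLin A₂).IsSymmetric := Matrix.isHermitian_iff_isSymmetric.1 hA₂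
  -- Step A : L₁ (ball) ⊆ L₂ (ball)
  have stepA : ∀ x : EuclideanSpace ℝ (Fin d), ‖x‖ ≤ 1 → ∃ y, ‖y‖ ≤ 1 ∧ L₂ y = L₁ x := by
    intro x hx
    have hmem : ∀ u : EuclideanSpace ℝ (Fin d), ‖u‖ ≤ 1 →
        ∃ y, ‖y‖ ≤ 1 ∧ z₂ + L₂ y = z₁ + L₁ u := by
      intro u hu
      have : z₁ + L₁ u ∈ (fun x => z₂ + L₂ x) '' closedBall (0 : EuclideanSpace ℝ (Fin d)) 1 :=
        hsub ⟨u, by simpa [mem_closedBall, dist_zero_right] using hu, rfl⟩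
      obtain ⟨y, hy, hy2⟩ := this
      exact ⟨y, by simpa [mem_closedBall, dist_zero_right] using hy, hy2⟩
    obtain ⟨y₁, hy₁, e₁⟩ := hmem x hx
    obtain ⟨y₂, hy₂, e₂⟩ := hmem (-x) (by simpa using hx)
    refine ⟨(2⁻¹ : ℝ) • (y₁ - y₂), ?_, ?_⟩
    · rw [norm_smul]
      have : ‖y₁ - y₂‖ ≤ 2 := (norm_sub_le _ _).trans (by linarith)
      simp only [norm_inv, Real.norm_ofNat]
      nlinarith [norm_nonneg (y₁ - y₂)]
    · have h1 : L₂ y₁ = z₁ + L₁ x - z₂ := by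
        have := e₁; abel_nf at ⊢; linear_combination (norm := module) this
      have h2 : L₂ y₂ = z₁ - L₁ x - z₂ := by
        have := e₂; simp only [map_neg] at this; linear_combination (norm := module) this
      rw [LinearMap.map_smul, LinearMap.map_sub, h1, h2]
      module
  -- Step B : ‖L₁ v‖ ≤ ‖L₂ v‖ for all v
  have stepB : ∀ u : EuclideanSpace ℝ (Fin d), ‖L₁ u‖ ≤ ‖L₂ u‖ := by
    intro u
    rcases eq_or_ne (L₁ u) 0 with h | h
    · simp [h]
    · set x : EuclideanSpace ℝ (Fin d) := ‖L₁ u‖⁻¹ • L₁ u with hxdef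
      have hnx : ‖x‖ ≤ 1 := by
        rw [hxdef, norm_smul, norm_inv, norm_norm, inv_mul_cancel₀ (norm_ne_zero_iff.2 h)]
      obtain ⟨y, hy, hyx⟩ := stepA x hnx
      have key : (inner ℝ x (L₁ u) : ℝ) = ‖L₁ u‖ := by
        rw [hxdef, real_inner_smul_left, real_inner_self_eq_norm_sq, sq,
          inv_mul_cancel_left₀ (norm_ne_zero_iff.2 h)]
      calc ‖L₁ u‖ = (inner ℝ x (L₁ u) : ℝ) := key.symm
        _ = (inner ℝ (L₁ x) u : ℝ) := by rw [hS₁ x u]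
        _ = (inner ℝ (L₂ y) u : ℝ) := by rw [hyx]
        _ = (inner ℝ y (L₂ u) : ℝ) := (hS₂ y u)
        _ ≤ ‖y‖ * ‖L₂ u‖ := real_inner_le_norm _ _
        _ ≤ 1 * ‖L₂ u‖ := by
            have := norm_nonneg (L₂ u); exact mul_le_mul_of_nonneg_right hy this
        _ = ‖L₂ u‖ := one_mul _
  -- Step C : eigenvalue comparison
  intro i
  set v := hA₁.eigenvectorBasis with hv
  set w := hA₂.eigenvectorBasis with hw
  have hlami : 0 < lam i := by rw [hlam']; exact hA₁pd.eigenvalues_pos (σ i)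
  have hmui : 0 < mu i := by rw [hmu']; exact hA₂pd.eigenvalues_pos (τ i)
  set V : Submodule ℝ (EuclideanSpace ℝ (Fin d)) :=
    Submodule.span ℝ (Set.range (fun j : (Finset.Ici i) => v (σ j))) with hV
  set W : Submodule ℝ (EuclideanSpace ℝ (Fin d)) :=
    Submodule.span ℝ (Set.range (fun j : (Finset.Iic i) => w (τ j))) with hW
  -- dimensions
  have hdimV : Module.finrank ℝ V = d - i.val := by
    rw [hV, finrank_span_eq_card]
    · rw [Fintype.card_coe, Fin.card_Ici]
    · exact (v.orthonormal.comp _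
        (σ.injective.comp Subtype.val_injective)).linearIndependent
  have hdimW : Module.finrank ℝ W = i.val + 1 := by
    rw [hW, finrank_span_eq_card]
    · rw [Fintype.card_coe, Fin.card_Iic]
    · exact (w.orthonormal.comp _
        (τ.injective.comp Subtype.val_injective)).linearIndependent
  -- coefficient vanishing
  have hVx : ∀ x ∈ V, ∀ k : Fin d, σ.symm k < i → (inner ℝ (v k) x : ℝ) = 0 := by
    intro x hx
    refine Submodule.span_induction ?_ ?_ ?_ ?_ hx
    · rintro _ ⟨⟨j, hj⟩, rfl⟩ k hk
      have hne : k ≠ σ j := by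
        intro h; rw [h, Equiv.symm_apply_apply] at hk
        exact absurd (Finset.mem_Ici.1 hj) (not_le.2 hk)
      exact v.orthonormal.2 hne
    · intro k _; simp
    · intro a b _ _ ha hb k hk
      rw [inner_add_right, ha k hk, hb k hk, add_zero]
    · intro a b _ hb k hk
      rw [real_inner_smul_right, hb k hk, mul_zero]
  have hWx : ∀ x ∈ W, ∀ k : Fin d, i < τ.symm k → (inner ℝ (w k) x : ℝ) = 0 := by
    intro x hx
    refine Submodule.span_induction ?_ ?_ ?_ ?_ hx
    · rintro _ ⟨⟨j, hj⟩, rfl⟩ k hk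
      have hne : k ≠ τ j := by
        intro h; rw [h, Equiv.symm_apply_apply] at hk
        exact absurd (Finset.mem_Iic.1 hj) (not_le.2 hk)
      exact w.orthonormal.2 hne
    · intro k _; simp
    · intro a b _ _ ha hb k hk
      rw [inner_add_right, ha k hk, hb k hk, add_zero]
    · intro a b _ hb k hk
      rw [real_inner_smul_right, hb k hk, mul_zero]
  -- norm estimates
  have hlow : ∀ x ∈ V, lam i * ‖x‖ ≤ ‖L₁ x‖ := by
    intro x hxV
    have h2 : (lam i * ‖x‖) ^ 2 ≤ ‖L₁ x‖ ^ 2 := by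
      rw [mul_pow, parseval_aux v x, parseval_aux v (L₁ x), Finset.mul_sum]
      refine Finset.sum_le_sum fun k _ => ?_
      have hco : (inner ℝ (v k) (L₁ x) : ℝ) = hA₁.eigenvalues k * inner ℝ (v k) x := by
        rw [← hS₁ (v k) x, toEuclideanLin_eigen hA₁ k, real_inner_smul_left]
      rw [hco, mul_pow]
      rcases lt_or_ge (σ.symm k) i with hk | hk
      · rw [hVx x hxV k hk]; simp
      · have heig : lam i ≤ hA₁.eigenvalues k := by
          have : lam (σ.symm k) = hA₁.eigenvalues k := by
            rw [hlam']; simp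
          rw [← this]; exact hlam hk
        have : lam i ^ 2 ≤ hA₁.eigenvalues k ^ 2 := by nlinarith
        exact mul_le_mul_of_nonneg_right this (sq_nonneg _)
    nlinarith [norm_nonneg (L₁ x), mul_nonneg hlami.le (norm_nonneg x)]
  have hupp : ∀ x ∈ W, ‖L₂ x‖ ≤ mu i * ‖x‖ := by
    intro x hxW
    have h2 : ‖L₂ x‖ ^ 2 ≤ (mu i * ‖x‖) ^ 2 := by
      rw [mul_pow, parseval_aux w x, parseval_aux w (L₂ x), Finset.mul_sum]
      refine Finset.sum_le_sum fun k _ => ?_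
      have hco : (inner ℝ (w k) (L₂ x) : ℝ) = hA₂.eigenvalues k * inner ℝ (w k) x := by
        rw [← hS₂ (w k) x, toEuclideanLin_eigen hA₂ k, real_inner_smul_left]
      rw [hco, mul_pow]
      rcases lt_or_ge i (τ.symm k) with hk | hk
      · rw [hWx x hxW k hk]; simp
      · have heig : hA₂.eigenvalues k ≤ mu i := by
          have : mu (τ.symm k) = hA₂.eigenvalues k := by rw [hmu']; simp
          rw [← this]; exact hmu hk
        have hpos : 0 < hA₂.eigenvalues k := hA₂pd.eigenvalues_pos k
        have : hA₂.eigenvalues k ^ 2 ≤ mu i ^ 2 := by nlinarith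
        exact mul_le_mul_of_nonneg_right this (sq_nonneg _)
    nlinarith [norm_nonneg (L₂ x), mul_nonneg hmui.le (norm_nonneg x)]
  -- intersection is nontrivial
  have hbot : V ⊓ W ≠ ⊥ := by
    intro hb
    have hsum := Submodule.finrank_sup_add_finrank_inf_eq V W
    rw [hb, finrank_bot, add_zero, hdimV, hdimW] at hsum
    have hle : Module.finrank ℝ ↥(V ⊔ W) ≤ d := by
      have := Submodule.finrank_le (V ⊔ W)
      simpa [finrank_euclideanSpace] using this
    have hid : i.val < d := i.isLt
    omega
  obtain ⟨x, hxVW, hx0⟩ := Submodule.exists_mem_ne_zero_of_ne_bot hbot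
  have hxn : 0 < ‖x‖ := norm_pos_iff.2 hx0
  have chain : lam i * ‖x‖ ≤ mu i * ‖x‖ :=
    (hlow x hxVW.1).trans ((stepB x).trans (hupp x hxVW.2))
  exact le_of_mul_le_mul_right (by simpa [mul_comm] using chain) hxn
end
end

section
/- Let n ≥ 1, let v₁, …, v_m be vectors in the closed Euclidean unit ball of ℝ^n, let β₁, …, β_m be positive reals, and let θ ∈ (0,1] satisfy Σ_{i=1}^m βᵢ = 1, Σ_{i=1}^m βᵢ vᵢ = 0, and Σ_{i=1}^m βᵢ ‖vᵢ‖² = θ. If c ∈ ℝ^n and r ≥ 0 are such that the closed ball of radius r centered at c is contained in the polar set {x ∈ ℝ^n : ⟨vᵢ, x⟩ ≤ 1 for all i ∈ {1,…,m}}, then r ≤ 1/θ. (In other words, the inradius of the polar of conv{v₁,…,v_m} is at most 1/θ.) -/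
open MeasureTheory RealInnerProductSpace Metric Set

noncomputable section

/-- **Inradius bound for the polar of a balanced configuration.**
If vectors `vᵢ` in the unit ball with positive weights `βᵢ` satisfy `∑ βᵢ = 1`, `∑ βᵢ vᵢ = 0`
and `∑ βᵢ ‖vᵢ‖² = θ ∈ (0,1]`, then any ball of radius `r` contained in the polar
`{x : ⟨vᵢ, x⟩ ≤ 1 ∀ i}` satisfies `r ≤ 1/θ`. -/
theorem stmt11 {n : ℕ} (hn : 1 ≤ n) {m : ℕ}
    (v : Fin m → EuclideanSpace ℝ (Fin n)) (hv : ∀ i, ‖v i‖ ≤ 1)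
    (β : Fin m → ℝ) (hβ : ∀ i, 0 < β i)
    (θ : ℝ) (hθ0 : 0 < θ) (hθ1 : θ ≤ 1)
    (h1 : ∑ i, β i = 1)
    (h2 : ∑ i, β i • v i = 0)
    (h3 : ∑ i, β i * ‖v i‖ ^ 2 = θ)
    (c : EuclideanSpace ℝ (Fin n)) (r : ℝ) (hr : 0 ≤ r)
    (hball : closedBall c r ⊆ {x : EuclideanSpace ℝ (Fin n) | ∀ i, ⟪v i, x⟫ ≤ 1}) :
    r ≤ 1 / θ := by
  have key : ∀ i, ⟪v i, c⟫ + r * ‖v i‖ ≤ 1 := by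
    intro i
    by_cases hvi : v i = 0
    · simp only [hvi, inner_zero_left, norm_zero, mul_zero, add_zero]
      exact zero_le_one
    · have hnorm : 0 < ‖v i‖ := norm_pos_iff.mpr hvi
      have hx : c + (r / ‖v i‖) • v i ∈ closedBall c r := by
        rw [mem_closedBall, dist_eq_norm]
        have : c + (r / ‖v i‖) • v i - c = (r / ‖v i‖) • v i := by abel
        rw [this, norm_smul, Real.norm_eq_abs, abs_of_nonneg (div_nonneg hr hnorm.le),
          div_mul_cancel₀ _ hnorm.ne']
      have := hball hx i
      simp only [Set.mem_setOf_eq, inner_add_right, real_inner_smul_right] at this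
      calc ⟪v i, c⟫ + r * ‖v i‖
          = ⟪v i, c⟫ + r / ‖v i‖ * ⟪v i, v i⟫ := by
            rw [real_inner_self_eq_norm_sq]
            field_simp
        _ ≤ 1 := this
  have hsum : ∑ i, β i * (⟪v i, c⟫ + r * ‖v i‖) ≤ 1 := by
    calc ∑ i, β i * (⟪v i, c⟫ + r * ‖v i‖) ≤ ∑ i, β i * 1 :=
          Finset.sum_le_sum fun i _ => mul_le_mul_of_nonneg_left (key i) (hβ i).le
      _ = 1 := by simp [h1]
  have hinner : ∑ i, β i * ⟪v i, c⟫ = 0 := by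
    have : ⟪∑ i, β i • v i, c⟫ = (0 : ℝ) := by rw [h2, inner_zero_left]
    rw [sum_inner] at this
    simp only [real_inner_smul_left] at this
    exact this
  have hsum2 : r * ∑ i, β i * ‖v i‖ ≤ 1 := by
    have : ∑ i, β i * (⟪v i, c⟫ + r * ‖v i‖)
        = (∑ i, β i * ⟪v i, c⟫) + r * ∑ i, β i * ‖v i‖ := by
      rw [Finset.mul_sum, ← Finset.sum_add_distrib]
      exact Finset.sum_congr rfl fun i _ => by ring
    rw [this, hinner, zero_add] at hsum
    exact hsum
  have hθle : θ ≤ ∑ i, β i * ‖v i‖ := by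
    rw [← h3]
    refine Finset.sum_le_sum fun i _ => ?_
    have : ‖v i‖ ^ 2 ≤ ‖v i‖ := by
      nlinarith [norm_nonneg (v i), hv i]
    exact mul_le_mul_of_nonneg_left this (hβ i).le
  rw [le_div_iff₀ hθ0]
  calc r * θ ≤ r * ∑ i, β i * ‖v i‖ := mul_le_mul_of_nonneg_left hθle hr
    _ ≤ 1 := hsum2
end
end
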